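/- Let a ≥ 0 and b ≥ 0 be integers and let Ψ ∈ ℂ[α_1,…,α_n] be a nonzero homogeneous polynomial of degree b. Then the linear map D : S_{a+b} → S_a from homogeneous forms of degree a+b to homogeneous forms of degree a, given by F ↦ Ψ∘F, is surjective. -/

import Mathlib

open MvPolynomial

/-- The iterated partial derivative `∂^m` applied to `F`: on a monomial `x^k` it gives
`(∏ᵢ kᵢ(kᵢ-1)⋯(kᵢ-mᵢ+1)) · x^(k-m)`, i.e. each dual variable `αᵢ` acts as `∂/∂xᵢ`. -/
noncomputable def mderiv {σ : Type*} (m : σ →₀ ℕ) (F : MvPolynomial σ ℂ) :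
    MvPolynomial σ ℂ :=
  Finsupp.sum (AddMonoidAlgebra.coeff F) fun k c =>
    MvPolynomial.monomial (k - m) (c * ∏ i ∈ m.support, (Nat.descFactorial (k i) (m i) : ℂ))

/-- The apolarity action `Θ ∘ F` of a polynomial `Θ` in the dual variables on `F`,
as a constant-coefficient differential operator. -/
noncomputable def diffOp {σ : Type*} (Θ F : MvPolynomial σ ℂ) : MvPolynomial σ ℂ :=
  Finsupp.sum (AddMonoidAlgebra.coeff Θ) fun m c => c • mderiv m F

/-- Apolar length `al F`: the dimension of the space `Diff(F) = {Θ ∘ F : Θ ∈ T}` of all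
partial derivatives of `F` of all orders (including `F` itself). -/
noncomputable def apolarLength {σ : Type*} (F : MvPolynomial σ ℂ) : ℕ :=
  Module.finrank ℂ (Submodule.span ℂ (Set.range fun Θ => diffOp Θ F))

/-- The Hilbert function of the apolar algebra of `F`: the dimension of the span of the
`i`-th order partial derivatives `{Θ ∘ F : Θ homogeneous of degree i}`. -/
noncomputable def hilbFn {σ : Type*} (F : MvPolynomial σ ℂ) (i : ℕ) : ℕ :=
  Module.finrank ℂ (Submodule.span ℂ
    {G : MvPolynomial σ ℂ | ∃ Θ : MvPolynomial σ ℂ, Θ.IsHomogeneous i ∧ diffOp Θ F = G})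

/-- Waring rank of a degree-`d` form: the least `r` such that
`F = c₁ ℓ₁^d + ⋯ + c_r ℓ_r^d` for linear forms `ℓᵢ` and scalars `cᵢ ∈ ℂ`. -/
noncomputable def waringRank {σ : Type*} [Fintype σ] (d : ℕ) (F : MvPolynomial σ ℂ) : ℕ :=
  sInf {r : ℕ | ∃ (c : Fin r → ℂ) (v : Fin r → σ → ℂ),
    F = ∑ i, c i • (∑ j, v i j • MvPolynomial.X j) ^ d}

/-! The apolarity pairing `⟨Θ, F⟩ = coeff 0 (Θ ∘ F)` on forms of degree `d` is perfect, being
diagonal on monomials: `⟨α^m, x^k⟩ = δ_{mk} k!`. Since `(Θ * Ψ) ∘ F = Θ ∘ (Ψ ∘ F)`, the transpose of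
`F ↦ Ψ ∘ F` with respect to these pairings is `Θ ↦ Θ * Ψ`, which is injective because
`ℂ[α₁, …, αₙ]` is a domain. A linear map into a finite-dimensional space with injective transpose
is surjective. -/

open Function

theorem LinearMap.surjective_of_dualMap_comp_eq {K V W : Type*} [Field K] [AddCommGroup V]
    [Module K V] [AddCommGroup W] [Module K W] [FiniteDimensional K W] {D : V →ₗ[K] W}
    {M : W →ₗ[K] V} {BV : V →ₗ[K] Module.Dual K V} {BW : W →ₗ[K] Module.Dual K W}
    (hBV : Injective BV) (hBW : Injective BW) (hM : Injective M)
    (hadj : D.dualMap ∘ₗ BW = BV ∘ₗ M) : Surjective D := by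
  have hBW' : Surjective BW := (LinearMap.injective_iff_surjective_of_finrank_eq_finrank
    (Subspace.dual_finrank_eq (K := K) (V := W)).symm).mp hBW
  rw [← LinearMap.dualMap_injective_iff]
  refine Injective.of_comp_right ?_ hBW'
  rw [← LinearMap.coe_comp, hadj, LinearMap.coe_comp]
  exact hBV.comp hM

section Apolarity

variable {σ : Type*}

lemma mderiv_monomial (m k : σ →₀ ℕ) (c : ℂ) :
    mderiv m (monomial k c) =
      monomial (k - m) (c * ∏ i ∈ m.support, ((k i).descFactorial (m i) : ℂ)) := by
  unfold mderiv
  exact sum_monomial_eq (by simp)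

lemma prod_descFactorial_eq_zero_of_not_le {m k : σ →₀ ℕ} (h : ¬ m ≤ k) :
    ∏ i ∈ m.support, ((k i).descFactorial (m i) : ℂ) = 0 := by
  obtain ⟨i, hi⟩ : ∃ i, k i < m i := by simpa [Finsupp.le_def] using h
  refine Finset.prod_eq_zero (i := i) (Finsupp.mem_support_iff.2 (by omega)) ?_
  rw [Nat.descFactorial_eq_zero_iff_lt.2 hi, Nat.cast_zero]

lemma mderiv_monomial_of_not_le {m k : σ →₀ ℕ} (h : ¬ m ≤ k) (c : ℂ) :
    mderiv m (monomial k c) = 0 := by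
  rw [mderiv_monomial, prod_descFactorial_eq_zero_of_not_le h, mul_zero, monomial_zero]

lemma mderiv_add (m : σ →₀ ℕ) (F G : MvPolynomial σ ℂ) :
    mderiv m (F + G) = mderiv m F + mderiv m G := by
  unfold mderiv
  rw [AddMonoidAlgebra.coeff_add]
  exact Finsupp.sum_add_index' (fun k => by simp) (fun k c₁ c₂ => by rw [add_mul, map_add])

lemma mderiv_smul (m : σ →₀ ℕ) (c : ℂ) (F : MvPolynomial σ ℂ) :
    mderiv m (c • F) = c • mderiv m F := by
  unfold mderiv
  rw [AddMonoidAlgebra.coeff_smul, Finsupp.sum_smul_index (fun k => by simp), Finsupp.smul_sum]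
  refine Finset.sum_congr rfl fun k _ => ?_
  dsimp only
  rw [smul_monomial, smul_eq_mul, mul_assoc]

lemma mderiv_eq_sum (m : σ →₀ ℕ) (F : MvPolynomial σ ℂ) :
    mderiv m F = ∑ k ∈ F.support, mderiv m (monomial k (coeff k F)) := by
  simp only [mderiv_monomial]
  exact sum_def

lemma mderiv_mderiv (m m' : σ →₀ ℕ) (F : MvPolynomial σ ℂ) :
    mderiv m (mderiv m' F) = mderiv (m + m') F := by
  classical
  induction F using MvPolynomial.induction_on' with
  | add p q hp hq => rw [mderiv_add, mderiv_add, mderiv_add, hp, hq]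
  | monomial k c =>
    simp only [mderiv_monomial, tsub_tsub, add_comm m', mul_assoc]
    congr 2
    -- the three falling-factorial products run over different supports; compare them on `s`
    set s := m.support ∪ m'.support
    have extend (k' n : σ →₀ ℕ) (hn : n.support ⊆ s) :
        ∏ i ∈ n.support, ((k' i).descFactorial (n i) : ℂ) =
          ∏ i ∈ s, ((k' i).descFactorial (n i) : ℂ) :=
      Finset.prod_subset hn fun i _ hi => by simp [Finsupp.notMem_support_iff.mp hi]
    rw [extend _ m' Finset.subset_union_right, extend _ m Finset.subset_union_left,
      extend _ (m + m') Finsupp.support_add, ← Finset.prod_mul_distrib]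
    refine Finset.prod_congr rfl fun i _ => ?_
    rw [Finsupp.add_apply, Finsupp.tsub_apply, ← Nat.cast_mul, mul_comm,
      ← Nat.descFactorial_mul_descFactorial (Nat.le_add_left (m' i) (m i)), Nat.add_sub_cancel]

lemma isHomogeneous_mderiv_monomial {a b : ℕ} {m k : σ →₀ ℕ} (hm : m.degree = b)
    (hk : k.degree = a + b) (c : ℂ) : (mderiv m (monomial k c)).IsHomogeneous a := by
  by_cases h : m ≤ k
  · rw [mderiv_monomial]
    refine isHomogeneous_monomial _ ?_
    have := map_add Finsupp.degree m (k - m)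
    rw [add_tsub_cancel_of_le h] at this
    omega
  · rw [mderiv_monomial_of_not_le h]
    exact isHomogeneous_zero _ _ _

lemma isHomogeneous_diffOp {a b : ℕ} {Ψ F : MvPolynomial σ ℂ} (hΨ : Ψ.IsHomogeneous b)
    (hF : F.IsHomogeneous (a + b)) : (diffOp Ψ F).IsHomogeneous a := by
  rw [diffOp, sum_def]
  refine IsHomogeneous.sum _ _ _ fun m hm => ?_
  refine (homogeneousSubmodule σ ℂ a).smul_mem _ ?_
  rw [mem_homogeneousSubmodule, mderiv_eq_sum]
  exact IsHomogeneous.sum _ _ _ fun k hk => isHomogeneous_mderiv_monomial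
    (hΨ.degree_eq_sum_deg_support hm).symm (hF.degree_eq_sum_deg_support hk).symm _

lemma diffOp_monomial (m : σ →₀ ℕ) (c : ℂ) (F : MvPolynomial σ ℂ) :
    diffOp (monomial m c) F = c • mderiv m F := by
  unfold diffOp
  exact sum_monomial_eq (by simp)

lemma diffOp_add_left (Θ₁ Θ₂ F : MvPolynomial σ ℂ) :
    diffOp (Θ₁ + Θ₂) F = diffOp Θ₁ F + diffOp Θ₂ F := by
  unfold diffOp
  rw [AddMonoidAlgebra.coeff_add]
  exact Finsupp.sum_add_index' (fun m => by simp) (fun m c₁ c₂ => add_smul c₁ c₂ _)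

lemma diffOp_smul_left (c : ℂ) (Θ F : MvPolynomial σ ℂ) :
    diffOp (c • Θ) F = c • diffOp Θ F := by
  unfold diffOp
  rw [AddMonoidAlgebra.coeff_smul, Finsupp.sum_smul_index (fun m => by simp), Finsupp.smul_sum]
  exact Finset.sum_congr rfl fun m _ => mul_smul c _ _

lemma diffOp_add_right (Θ F G : MvPolynomial σ ℂ) :
    diffOp Θ (F + G) = diffOp Θ F + diffOp Θ G := by
  unfold diffOp
  rw [← Finsupp.sum_add]
  exact Finsupp.sum_congr fun m _ => by rw [mderiv_add, smul_add]

lemma diffOp_smul_right (c : ℂ) (Θ F : MvPolynomial σ ℂ) :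
    diffOp Θ (c • F) = c • diffOp Θ F := by
  unfold diffOp
  rw [Finsupp.smul_sum]
  exact Finsupp.sum_congr fun m _ => by rw [mderiv_smul, smul_comm]

lemma diffOp_mul (Θ Ψ F : MvPolynomial σ ℂ) :
    diffOp (Θ * Ψ) F = diffOp Θ (diffOp Ψ F) := by
  induction Θ using MvPolynomial.induction_on' with
  | add p q hp hq => rw [add_mul, diffOp_add_left, diffOp_add_left, hp, hq]
  | monomial u a =>
    induction Ψ using MvPolynomial.induction_on' with
    | add p q hp hq => rw [mul_add, diffOp_add_left, diffOp_add_left, diffOp_add_right, hp, hq]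
    | monomial v b =>
      rw [monomial_mul, diffOp_monomial, diffOp_monomial, diffOp_monomial, mderiv_smul,
        mderiv_mderiv, mul_smul]

variable (σ) in
noncomputable def diffOpBilin : MvPolynomial σ ℂ →ₗ[ℂ] MvPolynomial σ ℂ →ₗ[ℂ] MvPolynomial σ ℂ :=
  LinearMap.mk₂ ℂ diffOp diffOp_add_left diffOp_smul_left diffOp_add_right diffOp_smul_right

lemma coeff_zero_mderiv_monomial_self (k : σ →₀ ℕ) (c : ℂ) :
    coeff 0 (mderiv k (monomial k c)) = c * ∏ i ∈ k.support, ((k i).factorial : ℂ) := by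
  classical
  simp only [mderiv_monomial, tsub_self, coeff_monomial, if_true, Nat.descFactorial_self]

lemma coeff_zero_mderiv_monomial_of_ne {m k : σ →₀ ℕ} (h : m ≠ k) (c : ℂ) :
    coeff 0 (mderiv m (monomial k c)) = 0 := by
  classical
  by_cases hle : m ≤ k
  · rw [mderiv_monomial, coeff_monomial, if_neg]
    exact fun h' => h (le_antisymm hle (tsub_eq_zero_iff_le.mp h'))
  · rw [mderiv_monomial_of_not_le hle, coeff_zero]

lemma coeff_zero_diffOp_monomial (Θ : MvPolynomial σ ℂ) (k : σ →₀ ℕ) :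
    coeff 0 (diffOp Θ (monomial k 1)) = coeff k Θ * ∏ i ∈ k.support, ((k i).factorial : ℂ) := by
  rw [diffOp, sum_def, coeff_sum, Finset.sum_eq_single k, coeff_smul,
    coeff_zero_mderiv_monomial_self, one_mul, smul_eq_mul]
  · exact fun m _ hm => by rw [coeff_smul, coeff_zero_mderiv_monomial_of_ne hm, smul_zero]
  · exact fun hk => by rw [coeff_smul, notMem_support_iff.mp hk, zero_smul]

variable (σ) in
noncomputable def apolarPairing (d : ℕ) :
    homogeneousSubmodule σ ℂ d →ₗ[ℂ] Module.Dual ℂ (homogeneousSubmodule σ ℂ d) :=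
  ((diffOpBilin σ).compl₁₂ (homogeneousSubmodule σ ℂ d).subtype
    (homogeneousSubmodule σ ℂ d).subtype).compr₂ (lcoeff ℂ 0)

lemma apolarPairing_apply {d : ℕ} (Θ F : homogeneousSubmodule σ ℂ d) :
    apolarPairing σ d Θ F = coeff 0 (diffOp (Θ : MvPolynomial σ ℂ) F) :=
  rfl

lemma apolarPairing_injective (d : ℕ) : Injective (apolarPairing σ d) := by
  refine (injective_iff_map_eq_zero _).2 fun Θ hΘ => ?_
  by_contra hne
  obtain ⟨k, hk⟩ := support_nonempty.mpr (by simpa using hne : (Θ : MvPolynomial σ ℂ) ≠ 0)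
  have hΘd := (mem_homogeneousSubmodule _ _).mp Θ.2
  have hk_mem : monomial k 1 ∈ homogeneousSubmodule σ ℂ d :=
    isHomogeneous_monomial _ (hΘd.degree_eq_sum_deg_support hk).symm
  have hpair := LinearMap.congr_fun hΘ ⟨_, hk_mem⟩
  rw [apolarPairing_apply, coeff_zero_diffOp_monomial] at hpair
  exact mul_ne_zero (mem_support_iff.mp hk)
    (Finset.prod_ne_zero_iff.2 fun i _ => Nat.cast_ne_zero.2 (Nat.factorial_ne_zero _)) hpair

noncomputable def diffOpHom {b : ℕ} {Ψ : MvPolynomial σ ℂ} (hΨ : Ψ.IsHomogeneous b) (a : ℕ) :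
    homogeneousSubmodule σ ℂ (a + b) →ₗ[ℂ] homogeneousSubmodule σ ℂ a :=
  (diffOpBilin σ Ψ).restrict fun _ hF => isHomogeneous_diffOp hΨ hF

lemma surjective_diffOpHom [Finite σ] {b : ℕ} {Ψ : MvPolynomial σ ℂ} (hΨ0 : Ψ ≠ 0)
    (hΨ : Ψ.IsHomogeneous b) (a : ℕ) : Surjective (diffOpHom hΨ a) := by
  have : FiniteDimensional ℂ (homogeneousSubmodule σ ℂ a) :=
    Module.Finite.iff_fg.mpr (homogeneousSubmodule_fg σ ℂ a)
  let mulΨ : homogeneousSubmodule σ ℂ a →ₗ[ℂ] homogeneousSubmodule σ ℂ (a + b) :=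
    (LinearMap.mulRight ℂ Ψ).restrict fun _ hΘ => hΘ.mul hΨ
  refine LinearMap.surjective_of_dualMap_comp_eq (M := mulΨ)
    (apolarPairing_injective _) (apolarPairing_injective _) ?_ ?_
  · exact fun Θ₁ Θ₂ h => Subtype.ext (mul_left_injective₀ hΨ0 (congrArg Subtype.val h))
  · ext Θ F
    change coeff 0 (diffOp (Θ : MvPolynomial σ ℂ) (diffOp Ψ F)) =
      coeff 0 (diffOp ((Θ : MvPolynomial σ ℂ) * Ψ) F)
    rw [diffOp_mul]

end Apolarity

/-- For a nonzero homogeneous `Ψ` of degree `b` in the dual variables, the map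
`F ↦ Ψ∘F` from forms of degree `a + b` to forms of degree `a` is surjective. -/
theorem stmt7 (n a b : ℕ) (Ψ : MvPolynomial (Fin n) ℂ) (hΨ : Ψ ≠ 0)
    (hΨb : Ψ.IsHomogeneous b) :
    ∀ G : MvPolynomial (Fin n) ℂ, G.IsHomogeneous a →
      ∃ F : MvPolynomial (Fin n) ℂ, F.IsHomogeneous (a + b) ∧ diffOp Ψ F = G := by
  intro G hG
  obtain ⟨F, hF⟩ := surjective_diffOpHom hΨ hΨb a ⟨G, hG⟩
  exact ⟨F, F.2, congrArg Subtype.val hF⟩
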